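/- Let T be a lexicographically ordered ω₁-tree. Then for every countable set S ⊆ 𝓑(T), the closure of S in the order topology of the linear order (𝓑(T), <lex) is countable. -/

import Mathlib

noncomputable section

open Cardinal Set

def omega1 : Ordinal := (Cardinal.aleph 1).ord

def omega2 : Ordinal := (Cardinal.aleph 2).ord

/-- The height of an element `t`: the order type of its set of strict predecessors. -/
def htOf {X : Type} (lt : X → X → Prop)
    (wo : ∀ t : X, IsWellOrder {s : X // lt s t} fun a b => lt a.1 b.1) (t : X) : Ordinal :=
  @Ordinal.type {s : X // lt s t} (fun a b => lt a.1 b.1) (wo t)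

/-- A lexicographically ordered (normal) `ω₁`-tree. -/
structure LexOmega1Tree where
  T : Type
  lt : T → T → Prop
  lt_irrefl : ∀ a : T, ¬ lt a a
  lt_trans : ∀ {a b c : T}, lt a b → lt b c → lt a c
  /-- the strict predecessors of any element are well-ordered -/
  predWO : ∀ t : T, IsWellOrder {s : T // lt s t} fun a b => lt a.1 b.1
  /-- every level is countable -/
  level_countable : ∀ α : Ordinal, {t : T | htOf lt predWO t = α}.Countable
  /-- levels are nonempty exactly below `ω₁` -/
  level_nonempty : ∀ α : Ordinal, (∃ t : T, htOf lt predWO t = α) ↔ α < omega1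
  /-- normality: distinct elements of the same limit height have different predecessors -/
  normal : ∀ s t : T, htOf lt predWO s = htOf lt predWO t →
    Order.IsSuccLimit (htOf lt predWO s) → (∀ u : T, lt u s ↔ lt u t) → s = t
  /-- the lexicographic comparison of distinct elements of equal height -/
  lexlt : T → T → Prop
  lexlt_same : ∀ a b : T, lexlt a b → htOf lt predWO a = htOf lt predWO b ∧ a ≠ b
  lexlt_tricho : ∀ a b : T, htOf lt predWO a = htOf lt predWO b → a ≠ b →
    lexlt a b ∨ lexlt b a
  lexlt_asymm : ∀ a b : T, lexlt a b → ¬ lexlt b a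
  lexlt_trans : ∀ {a b c : T}, lexlt a b → lexlt b c → lexlt a c
  /-- coherence: the lexicographic comparison is decided at the splitting level -/
  lexlt_coh : ∀ a b a' b' : T, lexlt a b → lt a a' → lt b b' →
    htOf lt predWO a' = htOf lt predWO b' → lexlt a' b'

namespace LexOmega1Tree

variable (S : LexOmega1Tree)

def ht : S.T → Ordinal := htOf S.lt S.predWO

def le (a b : S.T) : Prop := S.lt a b ∨ a = b

/-- a cofinal branch : a downward closed chain meeting every level -/
def IsBranch (b : Set S.T) : Prop :=
  (∀ s t : S.T, t ∈ b → S.lt s t → s ∈ b) ∧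
  (∀ s t : S.T, s ∈ b → t ∈ b → s = t ∨ S.lt s t ∨ S.lt t s) ∧
  (∀ α : Ordinal, α < omega1 → ∃ t ∈ b, S.ht t = α)

/-- the set `𝓑(T)` of cofinal branches -/
def Branch : Type := {b : Set S.T // S.IsBranch b}

/-- the lexicographic order on branches (and on arbitrary sets of nodes) -/
def blex (A B : Set S.T) : Prop := ∃ a ∈ A, ∃ b ∈ B, S.lexlt a b

/-- the order topology on `(𝓑(T), <lex)`, generated by the open rays -/
def branchTop : TopologicalSpace S.Branch :=
  TopologicalSpace.generateFrom
    {s : Set S.Branch | ∃ a : S.Branch, s = {x | S.blex a.1 x.1} ∨ s = {x | S.blex x.1 a.1}}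

/-- `b` is a local right end point of the downward closed subtree `W` -/
def IsLocalRightEP (W b : Set S.T) : Prop :=
  ∃ t ∈ b, ∀ s ∈ b, S.ht t ≤ S.ht s →
    ∀ u ∈ W, S.ht u = S.ht s → S.le t u → u = s ∨ S.lexlt u s

/-- `b` is a local left end point of the downward closed subtree `W` -/
def IsLocalLeftEP (W b : Set S.T) : Prop :=
  ∃ t ∈ b, ∀ s ∈ b, S.ht t ≤ S.ht s →
    ∀ u ∈ W, S.ht u = S.ht s → S.le t u → u = s ∨ S.lexlt s u

def IsLocalEP (W b : Set S.T) : Prop := S.IsLocalRightEP W b ∨ S.IsLocalLeftEP W b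

end LexOmega1Tree

/-!
Since `A` is countable and two distinct branches differ at every level above their splitting
level, there is a countable level `ρ` at which the branches of `A` are pairwise distinct. The
branches through a fixed node of level `ρ` form a convex subset of `(𝓑(T), <lex)` containing at
most one point of `A`, and level `ρ` is countable. In any linear order, a set meeting each of
countably many convex pieces in at most one point has countable closure: two points of the
closure outside the set, in the same piece and approached from the same side, are separated by a
point of the set, which lies in their piece by convexity.
-/

section OrderTopology

variable {α β : Type*} [LinearOrder α] [TopologicalSpace α] [OrderTopology α]

theorem exists_mem_Ioo_of_mem_closure_of_notMem {s : Set α} {x : α} (hx : x ∈ closure s)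
    (hxs : x ∉ s) :
    (∀ c < x, (s ∩ Ioo c x).Nonempty) ∨ (∀ d, x < d → (s ∩ Ioo x d).Nonempty) := by
  by_contra! h
  obtain ⟨⟨c, hcx, hc⟩, ⟨d, hxd, hd⟩⟩ := h
  obtain ⟨a, ⟨hca, had⟩, has⟩ := mem_closure_iff.mp hx (Ioo c d) isOpen_Ioo ⟨hcx, hxd⟩
  rcases lt_trichotomy a x with hax | rfl | hxa
  · exact hc.subset ⟨has, hca, hax⟩
  · exact hxs has
  · exact hd.subset ⟨has, hxa, had⟩

/-- The closure of `s` meets each fibre of `p` in at most four points. -/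
theorem Set.InjOn.countable_closure {s : Set α} {p : α → β} (hinj : InjOn p s)
    (hp : (range p).Countable) (hconv : ∀ b, (p ⁻¹' {b}).OrdConnected) :
    (closure s).Countable := by
  have hs : s.Countable := (mapsTo_range p s).countable_of_injOn hinj hp
  let key : α → β × Prop × Prop := fun x =>
    (p x, ∃ a ∈ s, p a = p x ∧ x < a, ∀ c < x, (s ∩ Ioo c x).Nonempty)
  have separated : ∀ x ∈ closure s \ s, ∀ y ∈ closure s \ s, key x = key y → ¬ x < y := by
    rintro x ⟨hx, hxs⟩ y ⟨-, -⟩ hkey hxy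
    simp only [key, Prod.mk.injEq] at hkey
    obtain ⟨hpxy, hright, hleft⟩ := hkey
    obtain ⟨a, has, hxa, hay⟩ : (s ∩ Ioo x y).Nonempty := by
      by_cases hyl : ∀ c < y, (s ∩ Ioo c y).Nonempty
      · exact hyl x hxy
      · exact (exists_mem_Ioo_of_mem_closure_of_notMem hx hxs).resolve_left (hleft ▸ hyl) y hxy
    have hpa : p a = p x :=
      (hconv (p x)).out rfl hpxy.symm ⟨hxa.le, hay.le⟩
    obtain ⟨a', ha's, hpa', hya'⟩ : ∃ a ∈ s, p a = p y ∧ y < a := hright ▸ ⟨a, has, hpa, hxa⟩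
    have haa' : a = a' := hinj has ha's (hpa.trans (hpxy.trans hpa'.symm))
    exact (hay.trans hya').ne haa'
  have hrest : (closure s \ s).Countable := by
    refine MapsTo.countable_of_injOn (t := range p ×ˢ univ) (f := key)
      (fun x _ => ⟨mem_range_self x, trivial⟩) ?_ (hp.prod countable_univ)
    intro x hx y hy hkey
    by_contra hne
    rcases lt_or_gt_of_ne hne with hxy | hyx
    · exact separated x hx y hy hkey hxy
    · exact separated y hy x hx hkey.symm hyx
  exact (hs.union hrest).mono (by simp)

end OrderTopology

theorem iSup_lt_omega1 {ι : Type} [Countable ι] {f : ι → Ordinal} (h : ∀ i, f i < omega1) :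
    ⨆ i, f i < omega1 := by
  rw [omega1, Cardinal.ord_aleph] at *
  exact Ordinal.iSup_lt_omega_one h

theorem htOf_lt_htOf {X : Type} (lt : X → X → Prop)
    (wo : ∀ t : X, IsWellOrder {s : X // lt s t} fun a b => lt a.1 b.1)
    (lt_trans : ∀ {a b c : X}, lt a b → lt b c → lt a c) {s t : X} (h : lt s t) :
    htOf lt wo s < htOf lt wo t :=
  @PrincipalSeg.ordinal_type_lt _ _ _ _ (wo s) (wo t)
    { toFun := fun u => ⟨u.1, lt_trans u.2 h⟩
      inj' := fun _ _ huv => Subtype.ext (congrArg Subtype.val huv :)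
      map_rel_iff' := Iff.rfl
      top := ⟨s, h⟩
      mem_range_iff_rel' := fun u => ⟨by rintro ⟨v, rfl⟩; exact v.2, fun hu => ⟨⟨u.1, hu⟩, rfl⟩⟩ }

namespace LexOmega1Tree

variable {S : LexOmega1Tree}

theorem ht_lt_ht {s t : S.T} (h : S.lt s t) : S.ht s < S.ht t :=
  htOf_lt_htOf S.lt S.predWO S.lt_trans h

theorem ht_lt_omega1 (t : S.T) : S.ht t < omega1 := (S.level_nonempty (S.ht t)).mp ⟨t, rfl⟩

namespace Branch

def node (x : S.Branch) {α : Ordinal} (hα : α < omega1) : S.T := (x.2.2.2 α hα).choose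

variable {x y : S.Branch} {α γ : Ordinal.{0}}

theorem node_mem (hα : α < omega1) : x.node hα ∈ x.1 := (x.2.2.2 α hα).choose_spec.1

theorem ht_node (hα : α < omega1) : S.ht (x.node hα) = α := (x.2.2.2 α hα).choose_spec.2

theorem node_eq_of_mem {t : S.T} (ht : t ∈ x.1) (hα : α < omega1) (htα : S.ht t = α) :
    x.node hα = t := by
  rcases x.2.2.1 _ t (node_mem hα) ht with h | h | h
  · exact h
  · exact absurd ((ht_node hα).trans htα.symm) (ht_lt_ht h).ne
  · exact absurd (htα.trans (ht_node hα).symm) (ht_lt_ht h).ne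

theorem node_lt_node (hαγ : α < γ) (hγ : γ < omega1) :
    S.lt (x.node (hαγ.trans hγ)) (x.node hγ) := by
  rcases x.2.2.1 _ _ (node_mem (hαγ.trans hγ)) (node_mem hγ) with h | h | h
  · exact absurd (congrArg S.ht h) (by rw [ht_node, ht_node]; exact hαγ.ne)
  · exact h
  · exact absurd (ht_lt_ht h) (by rw [ht_node, ht_node]; exact hαγ.not_gt)

theorem node_eq_node_of_le (hγ : γ < omega1) (h : x.node hγ = y.node hγ) (hαγ : α ≤ γ) :
    x.node (hαγ.trans_lt hγ) = y.node (hαγ.trans_lt hγ) := by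
  rcases hαγ.eq_or_lt with rfl | hαγ
  · exact h
  · have hmem : x.node (hαγ.trans hγ) ∈ y.1 :=
      y.2.1 _ _ (node_mem hγ) (h ▸ node_lt_node hαγ hγ)
    exact (node_eq_of_mem hmem _ (ht_node _)).symm

theorem ext_node (h : ∀ α (hα : α < omega1), x.node hα = y.node hα) : x = y := by
  have subset : ∀ {x y : S.Branch}, (∀ α (hα : α < omega1), x.node hα = y.node hα) →
      x.1 ⊆ y.1 := by
    intro x y h t ht
    rw [← node_eq_of_mem ht (ht_lt_omega1 t) rfl, h]
    exact node_mem _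
  exact Subtype.ext (subset h |>.antisymm (subset fun α hα => (h α hα).symm))

theorem exists_node_ne (h : x ≠ y) : ∃ α, ∃ hα : α < omega1, x.node hα ≠ y.node hα := by
  by_contra! h'
  exact h (ext_node h')

theorem blex_iff : S.blex x.1 y.1 ↔ ∃ α, ∃ hα : α < omega1, S.lexlt (x.node hα) (y.node hα) := by
  constructor
  · rintro ⟨s, hs, t, ht, hst⟩
    refine ⟨S.ht s, ht_lt_omega1 s, ?_⟩
    rwa [node_eq_of_mem hs _ rfl,
      node_eq_of_mem ht (ht_lt_omega1 s) (S.lexlt_same s t hst).1.symm]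
  · rintro ⟨α, hα, h⟩
    exact ⟨_, node_mem hα, _, node_mem hα, h⟩

theorem lexlt_node_of_le (hγ : γ < omega1) (hαγ : α ≤ γ)
    (h : S.lexlt (x.node (hαγ.trans_lt hγ)) (y.node (hαγ.trans_lt hγ))) :
    S.lexlt (x.node hγ) (y.node hγ) := by
  rcases hαγ.eq_or_lt with rfl | hαγ
  · exact h
  · exact S.lexlt_coh _ _ _ _ h (node_lt_node hαγ hγ) (node_lt_node hαγ hγ)
      ((ht_node hγ).trans (ht_node hγ).symm)

instance : IsStrictTotalOrder S.Branch fun x y => S.blex x.1 y.1 where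
  irrefl x := by
    rintro ⟨s, hs, t, ht, hst⟩
    obtain ⟨hst_ht, hne⟩ := S.lexlt_same s t hst
    exact hne ((node_eq_of_mem hs (ht_lt_omega1 t) hst_ht).symm.trans (node_eq_of_mem ht _ rfl))
  trans x y z hxy hyz := by
    obtain ⟨α, hα, hxy⟩ := blex_iff.mp hxy
    obtain ⟨γ, hγ, hyz⟩ := blex_iff.mp hyz
    have hmax : max α γ < omega1 := max_lt hα hγ
    exact blex_iff.mpr ⟨_, hmax, S.lexlt_trans (lexlt_node_of_le hmax (le_max_left α γ) hxy)
      (lexlt_node_of_le hmax (le_max_right α γ) hyz)⟩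
  trichotomous x y hxy hyx := by
    by_contra hne
    obtain ⟨α, hα, hne⟩ := exists_node_ne hne
    rcases S.lexlt_tricho _ _ ((ht_node hα).trans (ht_node hα).symm) hne with h | h
    · exact hxy (blex_iff.mpr ⟨α, hα, h⟩)
    · exact hyx (blex_iff.mpr ⟨α, hα, h⟩)

open Classical in
instance : LinearOrder S.Branch := linearOrderOfSTO fun x y : S.Branch => S.blex x.1 y.1

instance : TopologicalSpace S.Branch := S.branchTop

instance : OrderTopology S.Branch := ⟨rfl⟩

theorem lexlt_node_of_lt (h : x < y) (hα : α < omega1) (hne : x.node hα ≠ y.node hα) :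
    S.lexlt (x.node hα) (y.node hα) :=
  (S.lexlt_tricho _ _ ((ht_node hα).trans (ht_node hα).symm) hne).resolve_right
    fun h' => h.not_gt (blex_iff.mpr ⟨α, hα, h'⟩)

theorem ordConnected_node_preimage (hα : α < omega1) (t : S.T) :
    ((fun x : S.Branch => x.node hα) ⁻¹' {t}).OrdConnected := by
  refine ordConnected_of_Ioo fun x (hx : x.node hα = t) y (hy : y.node hα = t) _ z ⟨hxz, hzy⟩ =>
    by_contra fun (hz : z.node hα ≠ t) => ?_
  have hlt₁ := lexlt_node_of_lt hxz hα (hx ▸ Ne.symm hz)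
  have hlt₂ := lexlt_node_of_lt hzy hα (hy ▸ hz)
  rw [hx] at hlt₁
  rw [hy] at hlt₂
  exact S.lexlt_asymm _ _ hlt₁ hlt₂

theorem countable_range_node (hα : α < omega1) :
    (range fun x : S.Branch => x.node hα).Countable :=
  (S.level_countable α).mono (by rintro _ ⟨x, rfl⟩; exact ht_node hα)

/-- `ρ` is the supremum of the levels at which pairs of branches of `A` split. -/
theorem exists_injOn_node {A : Set S.Branch} (hA : A.Countable) :
    ∃ ρ, ∃ hρ : ρ < omega1, InjOn (fun x : S.Branch => x.node hρ) A := by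
  have : Countable A := hA.to_subtype
  choose α hα hsplit using fun p : {p : A × A // p.1 ≠ p.2} =>
    exists_node_ne (Subtype.coe_injective.ne p.2)
  refine ⟨⨆ p, α p, iSup_lt_omega1 hα, fun x hx y hy hxy => ?_⟩
  by_contra hne
  let p : {p : A × A // p.1 ≠ p.2} := ⟨(⟨x, hx⟩, ⟨y, hy⟩), fun h => hne (congrArg Subtype.val h)⟩
  exact hsplit p (node_eq_node_of_le _ hxy (Ordinal.le_iSup α p))

end Branch

end LexOmega1Tree

/-- For a lexicographically ordered `ω₁`-tree `T`, the closure of every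
countable subset of `(𝓑(T), <lex)` in the order topology is countable. -/
theorem stmt1 (S : LexOmega1Tree) (A : Set S.Branch) (hA : A.Countable) :
    (@closure _ S.branchTop A).Countable := by
  obtain ⟨ρ, hρ, hinj⟩ := LexOmega1Tree.Branch.exists_injOn_node hA
  exact hinj.countable_closure (LexOmega1Tree.Branch.countable_range_node hρ)
    (LexOmega1Tree.Branch.ordConnected_node_preimage hρ)
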